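/- Let (A, X, I) be a formal context with X finite, let S₁, S₂ ⊆ X × X be substitution relations, let m₁, m₂ be mass functions on X, and let β ∈ [0,1]. Then for every B ⊆ A, if B ∈ ℙ(m₁ ∩_S m₂, β) then B ∈ ℙ(m₁ ∪_S m₂, β). -/

import Mathlib

/-- `Y`-restricted upward derivation operator of a formal context `(A, X, I)`:
`B↑_Y = {x ∈ Y | ∀ a ∈ B, (a,x) ∈ I}`. -/
def fcaUp {A X : Type*} (I : Set (A × X)) (Y : Set X) (B : Set A) : Set X :=
  {x ∈ Y | ∀ a ∈ B, (a, x) ∈ I}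

/-- Downward derivation operator: `Z↓ = {a ∈ A | ∀ x ∈ Z, (a,x) ∈ I}`. -/
def fcaDown {A X : Type*} (I : Set (A × X)) (Z : Set X) : Set A :=
  {a | ∀ x ∈ Z, (a, x) ∈ I}

/-- `B ⊆ A` is Galois-stable with respect to `Y ⊆ X` if `(B↑_Y)↓ = B`. -/
def GaloisStable {A X : Type*} (I : Set (A × X)) (Y : Set X) (B : Set A) : Prop :=
  fcaDown I (fcaUp I Y B) = B

/-- A (Dempster–Shafer) mass function on a finite set `X`: a nonnegative real-valued
function on subsets of `X` summing to `1`. -/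
def IsMassFunction {X : Type*} [Fintype X] (m : Finset X → ℝ) : Prop :=
  (∀ Y, 0 ≤ m Y) ∧ (∑ Y : Finset X, m Y = 1)

open scoped Classical in
/-- The stability index of `G ⊆ A`:
`ρ_m(G) = Σ { m(Y) : Y ⊆ X such that G is Galois-stable w.r.t. Y }`. -/
noncomputable def stabilityIndex {A X : Type*} [Fintype X] (I : Set (A × X))
    (m : Finset X → ℝ) (G : Set A) : ℝ :=
  ∑ Y : Finset X, if GaloisStable I (↑Y : Set X) G then m Y else 0

/-- The β-categorization `ℙ(m, β) = { (G↑_X)↓ : G ⊆ A with ρ_m(G) ≥ β }`. -/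
noncomputable def betaCategorization {A X : Type*} [Fintype X] (I : Set (A × X))
    (m : Finset X → ℝ) (β : ℝ) : Set (Set A) :=
  {B | ∃ G : Set A, β ≤ stabilityIndex I m G ∧ fcaDown I (fcaUp I Set.univ G) = B}

/-- The up-set restricted order: `m₁ ≤_↑ m₂` iff for every upward closed family `𝒱`
of subsets of `X`, `Σ_{Y ∈ 𝒱} m₁(Y) ≤ Σ_{Y ∈ 𝒱} m₂(Y)`. -/
def upLE {X : Type*} [Fintype X] (m₁ m₂ : Finset X → ℝ) : Prop :=
  ∀ V : Finset (Finset X), (∀ Y ∈ V, ∀ Z : Finset X, Y ⊆ Z → Z ∈ V) →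
    (∑ Y ∈ V, m₁ Y) ≤ ∑ Y ∈ V, m₂ Y

open scoped Classical in
/-- Substitution image of an agenda `Z ⊆ X` under a substitution relation `S ⊆ X × X`:
`Sub(Z) = {n | ∃ m ∈ Z, S(n,m)}`. -/
noncomputable def subImage {X : Type*} [Fintype X] (S : Set (X × X)) (Z : Finset X) :
    Finset X :=
  Finset.univ.filter fun n => ∃ m ∈ Z, (n, m) ∈ S

/-- Substitution-conjunctive combination:
`(m₁ ∩_S m₂)(Y) = Σ { m₁(Z₁)·m₂(Z₂) : Sub₂(Z₁) ∩ Sub₁(Z₂) = Y }`. -/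
noncomputable def substConj {X : Type*} [Fintype X] [DecidableEq X]
    (S₁ S₂ : Set (X × X)) (m₁ m₂ : Finset X → ℝ) (Y : Finset X) : ℝ :=
  ∑ p : Finset X × Finset X,
    if subImage S₂ p.1 ∩ subImage S₁ p.2 = Y then m₁ p.1 * m₂ p.2 else 0

/-- Substitution-disjunctive combination:
`(m₁ ∪_S m₂)(Y) = Σ { m₁(Z₁)·m₂(Z₂) : Sub₂(Z₁) ∪ Sub₁(Z₂) = Y }`. -/
noncomputable def substDisj {X : Type*} [Fintype X] [DecidableEq X]
    (S₁ S₂ : Set (X × X)) (m₁ m₂ : Finset X → ℝ) (Y : Finset X) : ℝ :=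
  ∑ p : Finset X × Finset X,
    if subImage S₂ p.1 ∪ subImage S₁ p.2 = Y then m₁ p.1 * m₂ p.2 else 0

/-! Both combinations push the product mass `m₁(Z₁)·m₂(Z₂)` forward, along
`(Z₁, Z₂) ↦ Sub₂(Z₁) ∩ Sub₁(Z₂)` and `(Z₁, Z₂) ↦ Sub₂(Z₁) ∪ Sub₁(Z₂)` respectively. The union
contains the intersection and Galois stability with respect to `Y` persists when `Y` grows, so
every `G` has at least the same stability index under `m₁ ∪_S m₂` as under `m₁ ∩_S m₂`. -/

theorem GaloisStable.mono {A X : Type*} {I : Set (A × X)} {Y Z : Set X} {G : Set A}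
    (hG : GaloisStable I Y G) (hYZ : Y ⊆ Z) : GaloisStable I Z G := by
  refine Set.Subset.antisymm (fun a ha => ?_) fun a ha x hx => hx.2 a ha
  rw [← hG]
  exact fun x hx => ha x ⟨hYZ hx.1, hx.2⟩

open scoped Classical in
theorem stabilityIndex_pushforward {A X ι : Type*} [Fintype X] [DecidableEq X] [Fintype ι]
    (I : Set (A × X)) (f : ι → Finset X) (w : ι → ℝ) (G : Set A) :
    stabilityIndex I (fun Y => ∑ i, if f i = Y then w i else 0) G =
      ∑ i, if GaloisStable I (f i : Set X) G then w i else 0 := by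
  unfold stabilityIndex
  simp only [Finset.ite_sum_zero]
  rw [Finset.sum_comm]
  refine Finset.sum_congr rfl fun i _ => ?_
  rw [Fintype.sum_eq_single (f i) fun Y hY => by simp [Ne.symm hY]]
  simp only [if_true]

theorem stabilityIndex_pushforward_mono {A X ι : Type*} [Fintype X] [DecidableEq X] [Fintype ι]
    (I : Set (A × X)) {f g : ι → Finset X} (hfg : ∀ i, f i ⊆ g i) {w : ι → ℝ}
    (hw : ∀ i, 0 ≤ w i) (G : Set A) :
    stabilityIndex I (fun Y => ∑ i, if f i = Y then w i else 0) G ≤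
      stabilityIndex I (fun Y => ∑ i, if g i = Y then w i else 0) G := by
  classical
  simp only [stabilityIndex_pushforward]
  refine Finset.sum_le_sum fun i _ => ?_
  by_cases hf : GaloisStable I (f i : Set X) G
  · simp [hf, hf.mono (Finset.coe_subset.2 (hfg i))]
  · simp only [hf, if_false]
    split_ifs
    exacts [hw i, le_rfl]

theorem betaCategorization_mono {A X : Type*} [Fintype X] {I : Set (A × X)}
    {m m' : Finset X → ℝ} (h : ∀ G, stabilityIndex I m G ≤ stabilityIndex I m' G) (β : ℝ) :
    betaCategorization I m β ⊆ betaCategorization I m' β :=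
  fun _ ⟨G, hG, hB⟩ => ⟨G, hG.trans (h G), hB⟩

theorem betaCategorization_substConj_substDisj_general {A X : Type*} [Fintype X] [DecidableEq X]
    (I : Set (A × X)) (S₁ S₂ : Set (X × X)) (m₁ m₂ : Finset X → ℝ)
    (h₁ : IsMassFunction m₁) (h₂ : IsMassFunction m₂)
    (β : ℝ) (B : Set A)
    (hB : B ∈ betaCategorization I (substConj S₁ S₂ m₁ m₂) β) :
    B ∈ betaCategorization I (substDisj S₁ S₂ m₁ m₂) β := by
  have hw (p : Finset X × Finset X) : 0 ≤ m₁ p.1 * m₂ p.2 := mul_nonneg (h₁.1 p.1) (h₂.1 p.2)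
  refine betaCategorization_mono (fun G => ?_) β hB
  exact stabilityIndex_pushforward_mono I (fun _ => Finset.inter_subset_union) hw G

/-- `B ∈ ℙ(m₁ ∩_S m₂, β)` implies `B ∈ ℙ(m₁ ∪_S m₂, β)`. -/
theorem betaCategorization_substConj_substDisj {A X : Type*} [Fintype X] [DecidableEq X]
    (I : Set (A × X)) (S₁ S₂ : Set (X × X)) (m₁ m₂ : Finset X → ℝ)
    (h₁ : IsMassFunction m₁) (h₂ : IsMassFunction m₂)
    (β : ℝ) (h0 : 0 ≤ β) (hβ1 : β ≤ 1) (B : Set A)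
    (hB : B ∈ betaCategorization I (substConj S₁ S₂ m₁ m₂) β) :
    B ∈ betaCategorization I (substDisj S₁ S₂ m₁ m₂) β :=
  betaCategorization_substConj_substDisj_general I S₁ S₂ m₁ m₂ h₁ h₂ β B hB
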